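/- Let D ≥ 1 and let ξ_{βγ} = ξ_{γβ} be a smooth symmetric tensor field on ℝ^D. Define the totally symmetric field T_{αβγ} := ∂_α ξ_{βγ} + ∂_β ξ_{γα} + ∂_γ ξ_{αβ}. Then the spin-3 curvature of T vanishes identically: for all indices α₁, β₁, α₂, β₂, α₃, β₃, one has Σ_{(s₁,s₂,s₃)∈{0,1}³} (−1)^{s₁+s₂+s₃} ∂_{c₁}∂_{c₂}∂_{c₃} T_{d₁d₂d₃} = 0 on ℝ^D, where (c_i, d_i) = (α_i, β_i) if s_i = 0 and (c_i, d_i) = (β_i, α_i) if s_i = 1. -/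

import Mathlib

/-- The partial derivative `∂_μ f` of a function `f : ℝ^D → ℝ`. -/
noncomputable def pd {D : ℕ} (μ : Fin D) (f : (Fin D → ℝ) → ℝ) : (Fin D → ℝ) → ℝ :=
  fun x => fderiv ℝ f x (Pi.single μ 1)

/-- Sign `(−1)^s` attached to `s ∈ {0,1}`, with `false ↦ 1` and `true ↦ −1`. -/
def bsign (s : Bool) : ℝ := if s then -1 else 1

/-- The upper index of the pair `(c, d)`: `(c,d) = (a,b)` if `s = 0` and `(b,a)` if `s = 1`. -/
def bfst {D : ℕ} (s : Bool) (a b : Fin D) : Fin D := if s then b else a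

/-- The lower index of the pair `(c, d)`: `(c,d) = (a,b)` if `s = 0` and `(b,a)` if `s = 1`. -/
def bsnd {D : ℕ} (s : Bool) (a b : Fin D) : Fin D := if s then a else b

/-- The spin-3 curvature of a rank-3 tensor field `T` on `ℝ^D`:
`R[T]_{α₁β₁α₂β₂α₃β₃} = Σ_{(s₁,s₂,s₃)∈{0,1}³} (−1)^{s₁+s₂+s₃} ∂_{c₁}∂_{c₂}∂_{c₃} T_{d₁d₂d₃}`,
i.e. `∂_{α₁}∂_{α₂}∂_{α₃} T_{β₁β₂β₃}` antisymmetrized in each pair `(α_i, β_i)`. -/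
noncomputable def spin3Curv {D : ℕ} (T : Fin D → Fin D → Fin D → (Fin D → ℝ) → ℝ)
    (α₁ β₁ α₂ β₂ α₃ β₃ : Fin D) : (Fin D → ℝ) → ℝ := fun x =>
  ∑ s : Bool × Bool × Bool,
    (bsign s.1 * bsign s.2.1 * bsign s.2.2) *
      pd (bfst s.1 α₁ β₁) (pd (bfst s.2.1 α₂ β₂) (pd (bfst s.2.2 α₃ β₃)
        (T (bsnd s.1 α₁ β₁) (bsnd s.2.1 α₂ β₂) (bsnd s.2.2 α₃ β₃)))) x

/-! By linearity it suffices to treat the three terms of `T` separately. In the `i`-th term the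
index `d_i` of the curvature carries a derivative `∂_{d_i}`, so the summand is symmetric in
`(c_i, d_i)` by Schwarz's theorem and the antisymmetrization in the `i`-th pair cancels it. -/

section PartialDerivatives

variable {D : ℕ} {f g : (Fin D → ℝ) → ℝ}

theorem contDiff_pd (hf : ContDiff ℝ (⊤ : ℕ∞) f) (μ : Fin D) : ContDiff ℝ (⊤ : ℕ∞) (pd μ f) :=
  (hf.fderiv_right (by simp)).clm_apply contDiff_const

theorem pd_add (hf : Differentiable ℝ f) (hg : Differentiable ℝ g) (μ : Fin D) :
    pd μ (f + g) = pd μ f + pd μ g := by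
  funext x
  simp only [pd, fderiv_add (hf x) (hg x), add_apply, Pi.add_apply]

theorem pd_pd_pd_add (hf : ContDiff ℝ (⊤ : ℕ∞) f) (hg : ContDiff ℝ (⊤ : ℕ∞) g) (a b c : Fin D) :
    pd a (pd b (pd c (f + g))) = pd a (pd b (pd c f)) + pd a (pd b (pd c g)) := by
  have diff : ∀ {h : (Fin D → ℝ) → ℝ}, ContDiff ℝ (⊤ : ℕ∞) h → Differentiable ℝ h :=
    fun hh => hh.differentiable (by simp)
  rw [pd_add (diff hf) (diff hg), pd_add (diff (contDiff_pd hf c)) (diff (contDiff_pd hg c)),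
    pd_add (diff (contDiff_pd (contDiff_pd hf c) b)) (diff (contDiff_pd (contDiff_pd hg c) b))]

theorem pd_comm (hf : ContDiff ℝ 2 f) (a b : Fin D) : pd a (pd b f) = pd b (pd a f) := by
  funext x
  have hf' : DifferentiableAt ℝ (fderiv ℝ f) x :=
    (hf.fderiv_right (m := 1) (by norm_num)).differentiable (by simp) x
  have pd_pd_eq : ∀ c d : Fin D,
      pd c (pd d f) x = fderiv ℝ (fderiv ℝ f) x (Pi.single c 1) (Pi.single d 1) := by
    intro c d
    change fderiv ℝ (fun y => fderiv ℝ f y (Pi.single d 1)) x (Pi.single c 1) = _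
    rw [fderiv_clm_apply hf' (differentiableAt_const _)]
    simp
  rw [pd_pd_eq, pd_pd_eq]
  exact (hf.contDiffAt.isSymmSndFDerivAt (by simp)) _ _

theorem pd_pd_pd_comm_outer_inner (hf : ContDiff ℝ (⊤ : ℕ∞) f) (a b c : Fin D) :
    pd a (pd c (pd b f)) = pd b (pd c (pd a f)) := by
  have hf₂ := contDiff_infty.1 hf 2
  rw [pd_comm hf₂ c b, pd_comm (contDiff_infty.1 (contDiff_pd hf c) 2) a b, pd_comm hf₂ a c]

end PartialDerivatives

section Spin3Curvature

variable {D : ℕ} {T T' : Fin D → Fin D → Fin D → (Fin D → ℝ) → ℝ} {α₁ β₁ α₂ β₂ α₃ β₃ : Fin D}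

theorem spin3Curv_add (hT : ∀ a b c, ContDiff ℝ (⊤ : ℕ∞) (T a b c))
    (hT' : ∀ a b c, ContDiff ℝ (⊤ : ℕ∞) (T' a b c)) :
    spin3Curv (T + T') α₁ β₁ α₂ β₂ α₃ β₃ =
      spin3Curv T α₁ β₁ α₂ β₂ α₃ β₃ + spin3Curv T' α₁ β₁ α₂ β₂ α₃ β₃ := by
  funext x
  simp only [spin3Curv, Pi.add_apply, pd_pd_pd_add (hT _ _ _) (hT' _ _ _), mul_add,
    Finset.sum_add_distrib]

theorem spin3Curv_eq_zero_of_symm_fst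
    (h : ∀ c₂ d₂ c₃ d₃, pd α₁ (pd c₂ (pd c₃ (T β₁ d₂ d₃))) = pd β₁ (pd c₂ (pd c₃ (T α₁ d₂ d₃)))) :
    spin3Curv T α₁ β₁ α₂ β₂ α₃ β₃ = 0 := by
  funext x
  simp only [spin3Curv, Fintype.sum_prod_type, Fintype.sum_bool, bsign, bfst, bsnd, h,
    if_true, if_false, Bool.false_eq_true, Pi.zero_apply]
  ring

theorem spin3Curv_eq_zero_of_symm_snd
    (h : ∀ c₁ d₁ c₃ d₃, pd c₁ (pd α₂ (pd c₃ (T d₁ β₂ d₃))) = pd c₁ (pd β₂ (pd c₃ (T d₁ α₂ d₃)))) :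
    spin3Curv T α₁ β₁ α₂ β₂ α₃ β₃ = 0 := by
  funext x
  simp only [spin3Curv, Fintype.sum_prod_type, Fintype.sum_bool, bsign, bfst, bsnd, h,
    if_true, if_false, Bool.false_eq_true, Pi.zero_apply]
  ring

theorem spin3Curv_eq_zero_of_symm_thd
    (h : ∀ c₁ d₁ c₂ d₂, pd c₁ (pd c₂ (pd α₃ (T d₁ d₂ β₃))) = pd c₁ (pd c₂ (pd β₃ (T d₁ d₂ α₃)))) :
    spin3Curv T α₁ β₁ α₂ β₂ α₃ β₃ = 0 := by
  funext x
  simp only [spin3Curv, Fintype.sum_prod_type, Fintype.sum_bool, bsign, bfst, bsnd, h,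
    if_true, if_false, Bool.false_eq_true, Pi.zero_apply]
  ring

variable {U : Fin D → Fin D → (Fin D → ℝ) → ℝ}

theorem spin3Curv_pd_fst_eq_zero (hU : ∀ b c, ContDiff ℝ (⊤ : ℕ∞) (U b c)) :
    spin3Curv (fun a b c => pd a (U b c)) α₁ β₁ α₂ β₂ α₃ β₃ = 0 := by
  refine spin3Curv_eq_zero_of_symm_fst fun c₂ d₂ c₃ d₃ => ?_
  have hU₂ := contDiff_infty.1 (hU d₂ d₃) 2
  rw [pd_comm hU₂ c₃ β₁, pd_pd_pd_comm_outer_inner (contDiff_pd (hU d₂ d₃) c₃),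
    pd_comm hU₂ α₁ c₃]

theorem spin3Curv_pd_snd_eq_zero (hU : ∀ b c, ContDiff ℝ (⊤ : ℕ∞) (U b c)) :
    spin3Curv (fun a b c => pd b (U c a)) α₁ β₁ α₂ β₂ α₃ β₃ = 0 :=
  spin3Curv_eq_zero_of_symm_snd fun c₁ _ c₃ _ =>
    congrArg (pd c₁) (pd_pd_pd_comm_outer_inner (hU _ _) α₂ β₂ c₃)

theorem spin3Curv_pd_thd_eq_zero (hU : ∀ b c, ContDiff ℝ (⊤ : ℕ∞) (U b c)) :
    spin3Curv (fun a b c => pd c (U a b)) α₁ β₁ α₂ β₂ α₃ β₃ = 0 :=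
  spin3Curv_eq_zero_of_symm_thd fun c₁ _ c₂ _ =>
    congrArg (pd c₁ ∘ pd c₂) (pd_comm (contDiff_infty.1 (hU _ _) 2) α₃ β₃)

end Spin3Curvature

theorem spin_three_pure_gauge_has_zero_curvature_general (D : ℕ)
    (ξ : Fin D → Fin D → (Fin D → ℝ) → ℝ)
    (hsmooth : ∀ β γ, ContDiff ℝ (⊤ : ℕ∞) (ξ β γ))
    (T : Fin D → Fin D → Fin D → (Fin D → ℝ) → ℝ)
    (hT : ∀ α β γ x, T α β γ x = pd α (ξ β γ) x + pd β (ξ γ α) x + pd γ (ξ α β) x) :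
    ∀ α₁ β₁ α₂ β₂ α₃ β₃ x, spin3Curv T α₁ β₁ α₂ β₂ α₃ β₃ x = 0 := by
  intro α₁ β₁ α₂ β₂ α₃ β₃ x
  have hT_eq : T = (fun a b c => pd a (ξ b c)) + (fun a b c => pd b (ξ c a)) +
      (fun a b c => pd c (ξ a b)) := by
    funext a b c y
    exact hT a b c y
  have smooth_pd : ∀ μ b c, ContDiff ℝ (⊤ : ℕ∞) (pd μ (ξ b c)) :=
    fun μ b c => contDiff_pd (hsmooth b c) μ
  rw [hT_eq, spin3Curv_add (T := (fun a b c => pd a (ξ b c)) + fun a b c => pd b (ξ c a))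
      (fun a b c => (smooth_pd a b c).add (smooth_pd b c a)) (fun a b c => smooth_pd c a b),
    spin3Curv_add (fun a b c => smooth_pd a b c) (fun a b c => smooth_pd b c a),
    spin3Curv_pd_fst_eq_zero hsmooth, spin3Curv_pd_snd_eq_zero hsmooth,
    spin3Curv_pd_thd_eq_zero hsmooth]
  simp

/-- Gauge invariance of the spin-3 curvature: the curvature of the pure gauge field
`T_{αβγ} = ∂_α ξ_{βγ} + ∂_β ξ_{γα} + ∂_γ ξ_{αβ}` vanishes identically. -/
theorem spin_three_pure_gauge_has_zero_curvature (D : ℕ) (hD : 1 ≤ D)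
    (ξ : Fin D → Fin D → (Fin D → ℝ) → ℝ)
    (hsmooth : ∀ β γ, ContDiff ℝ (⊤ : ℕ∞) (ξ β γ))
    (hξsym : ∀ β γ, ξ β γ = ξ γ β)
    (T : Fin D → Fin D → Fin D → (Fin D → ℝ) → ℝ)
    (hT : ∀ α β γ x, T α β γ x = pd α (ξ β γ) x + pd β (ξ γ α) x + pd γ (ξ α β) x) :
    ∀ α₁ β₁ α₂ β₂ α₃ β₃ x, spin3Curv T α₁ β₁ α₂ β₂ α₃ β₃ x = 0 :=
  spin_three_pure_gauge_has_zero_curvature_general D ξ hsmooth T hT
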